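/- arXiv:0708.0981 — 8 statements merged into one kernel-verified Lean document; each statement's English description precedes it below -/
import Mathlib

section
/- Let A ≥ 0 be a real number and U(x) = 1 if x ≤ A, U(x) = 0 if x > A. Suppose g : ℕ → ℝ satisfies ∑_{x=0}^∞ g(x) e^{-θ}θ^x/x! = θ·∑_{x=0}^{⌊A⌋} e^{-θ}θ^x/x! for every θ > 0, with the left-hand series absolutely convergent for every θ > 0. Then g(x) = x·1{x ≤ ⌊A⌋ + 1} for every x ∈ ℕ; that is, Robbins' V estimator is the unique unbiased estimator of U(X)·θ in the Poisson case. -/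
/-!
Robbins' estimator `V(x) = x · 1{x ≤ ⌊A⌋ + 1}` is unbiased for `U(X) θ` because of the recursion
`(x + 1) p_θ(x + 1) = θ p_θ(x)` of the Poisson weights. Hence `g - V` has zero Poisson mean for
every `θ > 0`, so the power series `∑ (g - V)(x) θ^x / x!` vanishes on `(0, ∞)`; by the principle of
isolated zeros it vanishes identically, and so do its coefficients.
-/

/-- Poisson probability mass function with mean `θ`. -/
noncomputable def poissonPmf (θ : ℝ) (x : ℕ) : ℝ :=
  Real.exp (-θ) * θ ^ x / (Nat.factorial x : ℝ)

open Filter Topology FormalMultilinearSeries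

theorem eq_zero_of_frequently_tsum_mul_pow_eq_zero {𝕜 : Type*} [NontriviallyNormedField 𝕜]
    [CompleteSpace 𝕜] {a : ℕ → 𝕜} {r : ℝ} (hr : 0 < r)
    (hs : Summable fun n => ‖a n‖ * r ^ n)
    (h0 : ∃ᶠ z in 𝓝[≠] (0 : 𝕜), ∑' n, a n * z ^ n = 0) : a = 0 := by
  set p := ofScalars 𝕜 a
  have hrad : ENNReal.ofReal r ≤ p.radius :=
    p.le_radius_of_summable (r := r.toNNReal) (by simpa [p, Real.coe_toNNReal r hr.le] using hs)
  have hp : HasFPowerSeriesAt (ofScalarsSum a) p 0 :=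
    (p.hasFPowerSeriesOnBall ((ENNReal.ofReal_pos.mpr hr).trans_le hrad)).hasFPowerSeriesAt
  have hzero : ∀ᶠ z in 𝓝 (0 : 𝕜), ofScalarsSum a z = 0 :=
    hp.analyticAt.frequently_zero_iff_eventually_zero.mp (by simpa [ofScalarsSum_eq_tsum] using h0)
  exact (ofScalars_series_eq_zero 𝕜).mp (hp.eq_zero_of_eventually hzero)

theorem poissonPmf_eq_exp_mul (θ : ℝ) (x : ℕ) :
    poissonPmf θ x = Real.exp (-θ) * (θ ^ x / x.factorial) :=
  mul_div_assoc _ _ _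

theorem tsum_mul_poissonPmf (f : ℕ → ℝ) (θ : ℝ) :
    ∑' x, f x * poissonPmf θ x = Real.exp (-θ) * ∑' x, f x / x.factorial * θ ^ x := by
  rw [← tsum_mul_left]
  refine tsum_congr fun x => ?_
  rw [poissonPmf_eq_exp_mul]
  ring

theorem eq_zero_of_tsum_mul_poissonPmf_eq_zero {f : ℕ → ℝ} {θ₀ : ℝ} (hθ₀ : 0 < θ₀)
    (hs : Summable fun x => f x * poissonPmf θ₀ x)
    (h0 : ∀ θ, 0 < θ → ∑' x, f x * poissonPmf θ x = 0) : f = 0 := by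
  have hcoeff : (fun x => f x / x.factorial) = 0 := by
    refine eq_zero_of_frequently_tsum_mul_pow_eq_zero hθ₀ ?_ ?_
    · refine (hs.abs.mul_left (Real.exp θ₀)).congr fun x => ?_
      rw [poissonPmf_eq_exp_mul, Real.norm_eq_abs, abs_mul, abs_mul, abs_div, abs_div,
        abs_of_pos (Real.exp_pos _), abs_of_pos (pow_pos hθ₀ x), Nat.abs_cast, Real.exp_neg]
      field_simp
    · have hpos : ∀ᶠ θ in 𝓝[>] (0 : ℝ), ∑' x, f x / x.factorial * θ ^ x = 0 :=
        eventually_nhdsWithin_of_forall fun θ (hθ : 0 < θ) => by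
          simpa [tsum_mul_poissonPmf, Real.exp_ne_zero] using h0 θ hθ
      exact hpos.frequently.filter_mono (nhdsGT_le_nhdsNE 0)
  funext x
  simpa [Nat.factorial_ne_zero] using congrFun hcoeff x

theorem poissonPmf_nonneg {θ : ℝ} (hθ : 0 ≤ θ) (x : ℕ) : 0 ≤ poissonPmf θ x := by
  unfold poissonPmf
  positivity

theorem succ_mul_poissonPmf_succ (θ : ℝ) (x : ℕ) :
    (x + 1 : ℝ) * poissonPmf θ (x + 1) = θ * poissonPmf θ x := by
  unfold poissonPmf
  rw [Nat.factorial_succ]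
  push_cast
  field_simp
  ring

def robbinsV (N x : ℕ) : ℝ := if x ≤ N + 1 then x else 0

theorem hasSum_robbinsV_mul_poissonPmf (N : ℕ) (θ : ℝ) :
    HasSum (fun x => robbinsV N x * poissonPmf θ x)
      (θ * ∑ x ∈ Finset.range (N + 1), poissonPmf θ x) := by
  have hfin := hasSum_sum_of_ne_finset_zero (L := SummationFilter.unconditional ℕ)
    (f := fun x => robbinsV N x * poissonPmf θ x) (s := Finset.range (N + 2)) fun x hx => by
      rw [robbinsV, if_neg (by simp at hx; omega), zero_mul]
  convert hfin using 1
  rw [Finset.sum_range_succ' _ (N + 1), Finset.mul_sum]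
  simp only [robbinsV, Nat.cast_zero, zero_mul, ite_self, add_zero]
  refine Finset.sum_congr rfl fun k hk => ?_
  rw [if_pos (by simp at hk; omega), Nat.cast_succ, succ_mul_poissonPmf_succ]

theorem poisson_V_unique_general (A : ℝ) (g : ℕ → ℝ)
    (habs : ∀ θ : ℝ, 0 < θ → Summable fun x : ℕ => |g x| * poissonPmf θ x)
    (hunb : ∀ θ : ℝ, 0 < θ →
      (∑' x : ℕ, g x * poissonPmf θ x) =
        θ * ∑ x ∈ Finset.range (Nat.floor A + 1), poissonPmf θ x) :
    ∀ x : ℕ, g x = if x ≤ Nat.floor A + 1 then (x : ℝ) else 0 := by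
  have hV := hasSum_robbinsV_mul_poissonPmf ⌊A⌋₊
  have hg : ∀ θ, 0 < θ → Summable fun x => g x * poissonPmf θ x := fun θ hθ =>
    .of_abs <| (habs θ hθ).congr fun x => by
      rw [abs_mul, abs_of_nonneg (poissonPmf_nonneg hθ.le x)]
  have hdiff : g - robbinsV ⌊A⌋₊ = 0 := by
    refine eq_zero_of_tsum_mul_poissonPmf_eq_zero one_pos ?_ fun θ hθ => ?_
    · simpa only [Pi.sub_apply, sub_mul] using (hg 1 one_pos).sub (hV 1).summable
    · simp only [Pi.sub_apply, sub_mul]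
      rw [(hg θ hθ).tsum_sub (hV θ).summable, hunb θ hθ, (hV θ).tsum_eq, sub_self]
  exact fun x => sub_eq_zero.mp (congrFun hdiff x)

/-- Uniqueness of the unbiased estimator in the Poisson case: if
`∑_x g(x) e^{-θ}θ^x/x! = θ·∑_{x=0}^{⌊A⌋} e^{-θ}θ^x/x!` for every `θ > 0`
(with the left-hand series absolutely convergent), then
`g(x) = x·1{x ≤ ⌊A⌋ + 1}` for every `x ∈ ℕ`. -/
theorem poisson_V_unique (A : ℝ) (hA : 0 ≤ A) (g : ℕ → ℝ)
    (habs : ∀ θ : ℝ, 0 < θ → Summable fun x : ℕ => |g x| * poissonPmf θ x)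
    (hunb : ∀ θ : ℝ, 0 < θ →
      (∑' x : ℕ, g x * poissonPmf θ x) =
        θ * ∑ x ∈ Finset.range (Nat.floor A + 1), poissonPmf θ x) :
    ∀ x : ℕ, g x = if x ≤ Nat.floor A + 1 then (x : ℝ) else 0 :=
  poisson_V_unique_general A g habs hunb
end

section
/- Let A ≥ 0 be a real number, let U(x) = 1 if x ≤ A and U(x) = 0 if x > A, and let X be a geometric random variable with mass function (1−θ)θ^x, x = 0,1,2,..., where 0 < θ < 1. Then the estimator V(X) = ∑_{i=0}^{X−1} U(i) = min(X, ⌊A⌋ + 1) satisfies E_θ[V(X)] = (θ/(1−θ))·E_θ[U(X)] for every 0 < θ < 1; that is, V(X) is an unbiased estimator of U(X) times the mean θ/(1−θ) of X. -/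
/-!
Robbins' identity: if `V(x) = ∑_{i<x} U(i)`, then `V(0) = 0` and `V(x+1) = V(x) + U(x)`, so
shifting the index in `∑ V(x) θ^x` gives `E[V] = θ E[V] + θ E[U]`, i.e. `(1-θ) E[V] = θ E[U]`.
-/

open Finset

/-- Geometric probability mass function `f(x|θ) = (1-θ)θ^x`, `x = 0,1,2,…`. -/
noncomputable def geometricPmf (θ : ℝ) (x : ℕ) : ℝ := (1 - θ) * θ ^ x

theorem one_sub_mul_tsum_sum_range_mul_pow (g : ℕ → ℝ) (θ : ℝ)
    (hV : Summable fun x => (∑ i ∈ range x, g i) * θ ^ x)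
    (hg : Summable fun x => g x * θ ^ x) :
    (1 - θ) * ∑' x, (∑ i ∈ range x, g i) * θ ^ x = θ * ∑' x, g x * θ ^ x := by
  have shift := hV.tsum_eq_zero_add
  have hstep : ∀ x, (∑ i ∈ range (x + 1), g i) * θ ^ (x + 1)
      = θ * ((∑ i ∈ range x, g i) * θ ^ x) + θ * (g x * θ ^ x) := by
    intro x
    rw [sum_range_succ]
    ring
  simp only [hstep, range_zero, sum_empty, zero_mul, zero_add] at shift
  rw [(hV.mul_left θ).tsum_add (hg.mul_left θ), tsum_mul_left, tsum_mul_left] at shift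
  linarith

theorem summable_mul_pow_of_abs_le {f : ℕ → ℝ} {C θ : ℝ} (hf : ∀ x, |f x| ≤ C)
    (hθ0 : 0 ≤ θ) (hθ1 : θ < 1) : Summable fun x => f x * θ ^ x :=
  ((summable_geometric_of_lt_one hθ0 hθ1).mul_left C).of_norm_bounded fun x => by
    rw [Real.norm_eq_abs, abs_mul, abs_pow, abs_of_nonneg hθ0]
    exact mul_le_mul_of_nonneg_right (hf x) (pow_nonneg hθ0 x)

theorem Nat.cast_min_eq_sum_range_ite {R : Type*} [AddCommMonoidWithOne R] (x m : ℕ) :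
    ((min x m : ℕ) : R) = ∑ i ∈ range x, if i < m then (1 : R) else 0 := by
  induction x with
  | zero => simp
  | succ x ih =>
    rw [sum_range_succ, ← ih]
    have hmin : min (x + 1) m = min x m + if x < m then 1 else 0 := by split_ifs <;> omega
    rw [hmin]
    push_cast
    rfl

theorem tsum_mul_geometricPmf (f : ℕ → ℝ) (θ : ℝ) :
    ∑' x, f x * geometricPmf θ x = (1 - θ) * ∑' x, f x * θ ^ x := by
  rw [← tsum_mul_left]
  congr 1 with x
  rw [geometricPmf]
  ring

/-- For the `U` function `U(x) = 1{x ≤ A}` and `X` geometric with parameter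
`0 < θ < 1`, Robbins' estimator `V(X) = ∑_{i=0}^{X-1} U(i) = min(X, ⌊A⌋ + 1)`
satisfies `E_θ[V(X)] = (θ/(1-θ))·E_θ[U(X)]`. -/
theorem geometric_V_unbiased (A : ℝ) (hA : 0 ≤ A) (θ : ℝ) (hθ0 : 0 < θ) (hθ1 : θ < 1) :
    (∑' x : ℕ, ((min x (Nat.floor A + 1) : ℕ) : ℝ) * geometricPmf θ x) =
      (θ / (1 - θ)) * ∑' x : ℕ, (if (x : ℝ) ≤ A then (1 : ℝ) else 0) * geometricPmf θ x := by
  set m := ⌊A⌋₊ + 1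
  have hU : ∀ x : ℕ, (x : ℝ) ≤ A ↔ x < m := fun x => by
    rw [Nat.lt_succ_iff, Nat.le_floor_iff hA]
  have hVbound : ∀ x, |∑ i ∈ range x, if i < m then (1 : ℝ) else 0| ≤ m := fun x => by
    rw [← Nat.cast_min_eq_sum_range_ite, abs_of_nonneg (Nat.cast_nonneg _)]
    exact_mod_cast min_le_right x m
  have hUbound : ∀ x : ℕ, |if x < m then (1 : ℝ) else 0| ≤ 1 := fun x => by
    split_ifs <;> norm_num
  have key := one_sub_mul_tsum_sum_range_mul_pow (fun i => if i < m then (1 : ℝ) else 0) θ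
    (summable_mul_pow_of_abs_le hVbound hθ0.le hθ1) (summable_mul_pow_of_abs_le hUbound hθ0.le hθ1)
  simp only [tsum_mul_geometricPmf, hU, Nat.cast_min_eq_sum_range_ite]
  rw [key]
  field_simp [(sub_pos.2 hθ1).ne']
end

section
/- Let A ≥ 0 be a real number, let U(x) = 1 if x ≤ A and U(x) = 0 if x > A, and let X be uniformly distributed on (0, θ), θ > 0. Then the estimator V(X) = X·U(X) + ∫_0^X U(t) dt, which equals 2X for X ≤ A and A for X > A, satisfies E_θ[V(X)] = θ·P_θ(X ≤ A) = min(A, θ) for every θ > 0; that is, V(X) is an unbiased estimator of U(X)·θ. -/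
/-!
Away from the single point `A`, `U = 1{x ≤ A}` is the derivative of `x ↦ min x A` and the
estimator `V` is the derivative of `x ↦ x · min x A`. The fundamental theorem of calculus off a
countable set therefore gives `∫₀^θ U = min A θ` and `∫₀^θ V = θ · min A θ`.
-/

open MeasureTheory Set

section Piecewise

variable {f g f' g' : ℝ → ℝ} {A : ℝ}

theorem hasDerivAt_ite_le_of_ne {x : ℝ} (hf : HasDerivAt f (f' x) x) (hg : HasDerivAt g (g' x) x)
    (hx : x ≠ A) :
    HasDerivAt (fun y => if y ≤ A then f y else g y) (if x ≤ A then f' x else g' x) x := by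
  rcases hx.lt_or_gt with hlt | hgt
  · rw [if_pos hlt.le]
    exact hf.congr_of_eventuallyEq <| (eventually_le_nhds hlt).mono fun y hy => if_pos hy
  · rw [if_neg hgt.not_ge]
    exact hg.congr_of_eventuallyEq <| (eventually_gt_nhds hgt).mono fun y hy => if_neg hy.not_ge

theorem intervalIntegrable_ite_le (hf' : Continuous f') (hg' : Continuous g') (a b : ℝ) :
    IntervalIntegrable (fun x => if x ≤ A then f' x else g' x) volume a b := by
  rw [intervalIntegrable_iff]
  exact Integrable.piecewise (s := Iic A) measurableSet_Iic
    (intervalIntegrable_iff.mp (hf'.intervalIntegrable a b)).integrableOn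
    (intervalIntegrable_iff.mp (hg'.intervalIntegrable a b)).integrableOn

theorem integral_ite_le_eq_sub (hf : ∀ x, HasDerivAt f (f' x) x)
    (hg : ∀ x, HasDerivAt g (g' x) x) (hf' : Continuous f') (hg' : Continuous g')
    (hfg : f A = g A) (a b : ℝ) :
    ∫ x in a..b, (if x ≤ A then f' x else g' x) =
      (if b ≤ A then f b else g b) - (if a ≤ A then f a else g a) := by
  have hcont : Continuous fun y => if y ≤ A then f y else g y :=
    Continuous.if_le (continuous_iff_continuousAt.mpr fun x => (hf x).continuousAt)
      (continuous_iff_continuousAt.mpr fun x => (hg x).continuousAt) continuous_id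
      continuous_const fun x hx => hx ▸ hfg
  exact integral_eq_of_hasDerivAt_off_countable _ _ (countable_singleton A) hcont.continuousOn
    (fun x hx => hasDerivAt_ite_le_of_ne (hf x) (hg x) hx.2) (intervalIntegrable_ite_le hf' hg' a b)

end Piecewise

theorem integral_ite_le_one_zero (A θ : ℝ) (hA : 0 ≤ A) :
    ∫ x in (0 : ℝ)..θ, (if x ≤ A then (1 : ℝ) else 0) = min A θ := by
  have hftc := integral_ite_le_eq_sub (A := A) (f := id) (g := fun _ => A)
    (fun x => hasDerivAt_id x) (fun x => hasDerivAt_const x A) continuous_const continuous_const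
    rfl 0 θ
  simp only [id, if_pos hA] at hftc
  rw [hftc, sub_zero, min_comm, min_def]

theorem integral_ite_le_two_mul (A θ : ℝ) :
    ∫ x in (0 : ℝ)..θ, (if x ≤ A then 2 * x else A) = θ * min A θ := by
  have hftc := integral_ite_le_eq_sub (A := A) (f := fun y => y * y) (g := fun y => A * y)
    (f' := fun x => 2 * x) (g' := fun _ => A)
    (fun x => by simpa [two_mul] using (hasDerivAt_id' x).fun_mul (hasDerivAt_id' x))
    (fun x => by simpa using (hasDerivAt_id x).const_mul A)
    (continuous_const.mul continuous_id) continuous_const rfl 0 θ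
  rw [hftc, min_comm, min_def]
  split_ifs <;> ring

/-- For the `U` function `U(x) = 1{x ≤ A}` and `X` uniform on `(0, θ)`, `θ > 0`,
Robbins' estimator `V(X) = X·U(X) + ∫_0^X U(t) dt` (which equals `2X` for
`X ≤ A` and `A` for `X > A`) satisfies `E_θ[V(X)] = θ·P_θ(X ≤ A) = min(A, θ)`. -/
theorem uniform_V_unbiased (A : ℝ) (hA : 0 ≤ A) (θ : ℝ) (hθ : 0 < θ) :
    (∫ x in Set.Ioo (0 : ℝ) θ, (if x ≤ A then 2 * x else A) * θ⁻¹) =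
        θ * ∫ x in Set.Ioo (0 : ℝ) θ, (if x ≤ A then (1 : ℝ) else 0) * θ⁻¹ ∧
      θ * (∫ x in Set.Ioo (0 : ℝ) θ, (if x ≤ A then (1 : ℝ) else 0) * θ⁻¹) = min A θ := by
  have integral_Ioo (F : ℝ → ℝ) :
      ∫ x in Ioo 0 θ, F x * θ⁻¹ = (∫ x in (0 : ℝ)..θ, F x) * θ⁻¹ := by
    rw [intervalIntegral.integral_of_le hθ.le, integral_Ioc_eq_integral_Ioo, integral_mul_const]
  rw [integral_Ioo, integral_Ioo, integral_ite_le_two_mul, integral_ite_le_one_zero A θ hA]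
  constructor <;> field_simp
end

section
/- Let A ≥ 0 be a real number, U(x) = 1 if x ≤ A and U(x) = 0 if x > A, and let X be Poisson with mean θ > 0. Let V(x) = x·1{x ≤ ⌊A⌋ + 1} and define V*(x) = V(x) for x ≠ ⌊A⌋ + 1 and V*(⌊A⌋ + 1) = 0. Let W : ℝ → [0, ∞) be measurable with W(0) = 0 and W(t) > 0 for t > 0. Then for every θ > 0, E_θ[W(V*(X) − U(X)θ)] ≤ E_θ[W(V(X) − U(X)θ)], and if E_θ[W(V(X) − U(X)θ)] < ∞ the inequality is strict; hence V(X) is an inadmissible estimator of U(X)θ under the loss W(a − S). -/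
/-- Risk of the estimator `δ` of `U(X)·θ` under the loss `W(a - S)`,
where `U(x) = 1{x ≤ A}` and `X` is Poisson with mean `θ`. -/
noncomputable def poissonRisk (A θ : ℝ) (W : ℝ → ℝ) (δ : ℕ → ℝ) : ENNReal :=
  ∑' x : ℕ,
    ENNReal.ofReal (W (δ x - (if (x : ℝ) ≤ A then (1 : ℝ) else 0) * θ) * poissonPmf θ x)

/-!
At `x₀ = ⌊A⌋ + 1 > A` the estimand `U(x₀)θ` vanishes, so `V*(x₀) = 0` incurs no loss there,
while `V(x₀) = x₀ > 0` incurs the positive loss `W(x₀)`. Elsewhere the two estimators agree,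
so the risk of `V` is that of `V*` plus `W(x₀) P_θ(X = x₀) > 0`.
-/

theorem poissonPmf_pos {θ : ℝ} (hθ : 0 < θ) (x : ℕ) : 0 < poissonPmf θ x := by
  unfold poissonPmf
  positivity

theorem poissonRisk_eq_add_poissonRisk_update_zero {A θ : ℝ} {W : ℝ → ℝ} (hW0 : W 0 = 0)
    (δ : ℕ → ℝ) {x₀ : ℕ} (hx₀ : A < x₀) :
    poissonRisk A θ W δ =
      ENNReal.ofReal (W (δ x₀) * poissonPmf θ x₀) + poissonRisk A θ W (Function.update δ x₀ 0) := by
  unfold poissonRisk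
  rw [ENNReal.tsum_eq_add_tsum_ite x₀, if_neg hx₀.not_ge, zero_mul, sub_zero]
  congr 1
  refine tsum_congr fun x => ?_
  rcases eq_or_ne x x₀ with rfl | hx
  · simp [if_neg hx₀.not_ge, hW0]
  · rw [if_neg hx, Function.update_of_ne hx]

theorem poisson_V_inadmissible_general (A : ℝ)
    (W : ℝ → ℝ)
    (hW0 : W 0 = 0) (hWpos : ∀ t : ℝ, 0 < t → 0 < W t)
    (V Vstar : ℕ → ℝ)
    (hV : ∀ x, V x = if x ≤ Nat.floor A + 1 then (x : ℝ) else 0)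
    (hVstar : ∀ x, Vstar x = if x = Nat.floor A + 1 then 0 else V x)
    (θ : ℝ) (hθ : 0 < θ) :
    poissonRisk A θ W Vstar ≤ poissonRisk A θ W V ∧
      (poissonRisk A θ W V < ⊤ → poissonRisk A θ W Vstar < poissonRisk A θ W V) := by
  set x₀ := Nat.floor A + 1
  have hx₀ : A < x₀ := by simpa [x₀] using Nat.lt_floor_add_one A
  have hVstar_eq : Vstar = Function.update V x₀ 0 := by
    funext x
    rw [hVstar, Function.update_apply]
  have hloss_pos : 0 < ENNReal.ofReal (W (V x₀) * poissonPmf θ x₀) := by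
    rw [hV, if_pos le_rfl]
    exact ENNReal.ofReal_pos.mpr (mul_pos (hWpos _ (by positivity)) (poissonPmf_pos hθ x₀))
  rw [poissonRisk_eq_add_poissonRisk_update_zero hW0 V hx₀, ← hVstar_eq]
  refine ⟨le_add_self, fun hfin => ?_⟩
  rw [add_comm]
  exact ENNReal.lt_add_right (lt_of_le_of_lt le_add_self hfin).ne hloss_pos.ne'

/-- Robbins' estimator `V(x) = x·1{x ≤ ⌊A⌋+1}` of `U(X)θ` (with `U(x) = 1{x ≤ A}`)
is inadmissible: the estimator `V*` that agrees with `V` except that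
`V*(⌊A⌋+1) = 0` has risk no larger for every `θ > 0`, and strictly smaller
whenever the risk of `V` is finite. -/
theorem poisson_V_inadmissible (A : ℝ) (hA : 0 ≤ A)
    (W : ℝ → ℝ) (hWmeas : Measurable W) (hWnonneg : ∀ t, 0 ≤ W t)
    (hW0 : W 0 = 0) (hWpos : ∀ t : ℝ, 0 < t → 0 < W t)
    (V Vstar : ℕ → ℝ)
    (hV : ∀ x, V x = if x ≤ Nat.floor A + 1 then (x : ℝ) else 0)
    (hVstar : ∀ x, Vstar x = if x = Nat.floor A + 1 then 0 else V x)
    (θ : ℝ) (hθ : 0 < θ) :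
    poissonRisk A θ W Vstar ≤ poissonRisk A θ W V ∧
      (poissonRisk A θ W V < ⊤ → poissonRisk A θ W Vstar < poissonRisk A θ W V) :=
  poisson_V_inadmissible_general A W hW0 hWpos V Vstar hV hVstar θ hθ
end

section
/- Let A ≥ 0 be a real number, U(x) = 1 if x ≤ A and U(x) = 0 if x > A, and let X be geometric with mass function (1−θ)θ^x, 0 < θ < 1. Let V(x) = min(x, ⌊A⌋ + 1) and define V*(x) = V(x) for x ≤ ⌊A⌋ and V*(x) = 0 for x ≥ ⌊A⌋ + 1. Let W : ℝ → [0, ∞) be measurable with W(0) = 0 and W(t) > 0 for t > 0. Then for every 0 < θ < 1, E_θ[W(V*(X) − U(X)·θ/(1−θ))] ≤ E_θ[W(V(X) − U(X)·θ/(1−θ))], and the inequality is strict whenever the right-hand risk is finite; hence V(X) is inadmissible under the loss W(a − S). -/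
/-- Risk of the estimator `δ` of `U(X)·θ/(1-θ)` under the loss `W(a - S)`,
where `U(x) = 1{x ≤ A}` and `X` is geometric with parameter `θ`. -/
noncomputable def geometricRisk (A θ : ℝ) (W : ℝ → ℝ) (δ : ℕ → ℝ) : ENNReal :=
  ∑' x : ℕ,
    ENNReal.ofReal
      (W (δ x - (if (x : ℝ) ≤ A then (1 : ℝ) else 0) * (θ / (1 - θ))) * geometricPmf θ x)

noncomputable def zeroAbove (A : ℝ) (δ : ℕ → ℝ) (x : ℕ) : ℝ := if (x : ℝ) ≤ A then δ x else 0

lemma geometricPmf_pos {θ : ℝ} (hθ0 : 0 < θ) (hθ1 : θ < 1) (x : ℕ) : 0 < geometricPmf θ x :=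
  mul_pos (sub_pos.mpr hθ1) (pow_pos hθ0 x)

section zeroAbove

variable {A θ : ℝ} {W : ℝ → ℝ}

lemma geometricRisk_zeroAbove_le (hW0 : W 0 = 0) (δ : ℕ → ℝ) :
    geometricRisk A θ W (zeroAbove A δ) ≤ geometricRisk A θ W δ := by
  refine ENNReal.tsum_le_tsum fun x => ?_
  by_cases hx : (x : ℝ) ≤ A <;> simp [zeroAbove, hx, hW0]

lemma geometricRisk_zeroAbove_lt (hW0 : W 0 = 0) (hθ0 : 0 < θ) (hθ1 : θ < 1)
    {δ : ℕ → ℝ} {x : ℕ} (hx : A < x) (hWx : 0 < W (δ x))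
    (hfin : geometricRisk A θ W δ < ⊤) :
    geometricRisk A θ W (zeroAbove A δ) < geometricRisk A θ W δ := by
  have hx' : ¬ (x : ℝ) ≤ A := not_le.mpr hx
  refine ENNReal.tsum_lt_tsum (i := x)
    (ne_top_of_le_ne_top hfin.ne (geometricRisk_zeroAbove_le hW0 δ))
    (fun y => by by_cases hy : (y : ℝ) ≤ A <;> simp [zeroAbove, hy, hW0]) ?_
  simpa [zeroAbove, hx', hW0] using mul_pos hWx (geometricPmf_pos hθ0 hθ1 x)

end zeroAbove

theorem geometric_V_inadmissible_general (A : ℝ) (hA : 0 ≤ A)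
    (W : ℝ → ℝ)
    (hW0 : W 0 = 0) (hWpos : ∀ t : ℝ, 0 < t → 0 < W t)
    (V Vstar : ℕ → ℝ)
    (hV : ∀ x, V x = ((min x (Nat.floor A + 1) : ℕ) : ℝ))
    (hVstar : ∀ x, Vstar x = if x ≤ Nat.floor A then V x else 0)
    (θ : ℝ) (hθ0 : 0 < θ) (hθ1 : θ < 1) :
    geometricRisk A θ W Vstar ≤ geometricRisk A θ W V ∧
      (geometricRisk A θ W V < ⊤ →
        geometricRisk A θ W Vstar < geometricRisk A θ W V) := by
  have hVstar_eq : Vstar = zeroAbove A V :=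
    funext fun x => by simp only [hVstar, zeroAbove, Nat.le_floor_iff hA]
  have hW_V : 0 < W (V (Nat.floor A + 1)) := hWpos _ (by rw [hV, min_self]; positivity)
  subst hVstar_eq
  exact ⟨geometricRisk_zeroAbove_le hW0 V,
    geometricRisk_zeroAbove_lt hW0 hθ0 hθ1 (by exact_mod_cast Nat.lt_floor_add_one A) hW_V⟩

/-- Theorem 2.1 (geometric case, `n = 1`): Robbins' estimator
`V(x) = min(x, ⌊A⌋+1)` of `U(X)·θ/(1-θ)` is inadmissible: the estimator `V*`
with `V*(x) = V(x)` for `x ≤ ⌊A⌋` and `V*(x) = 0` for `x ≥ ⌊A⌋+1` has risk no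
larger for every `0 < θ < 1`, and strictly smaller whenever the risk of `V`
is finite. -/
theorem geometric_V_inadmissible (A : ℝ) (hA : 0 ≤ A)
    (W : ℝ → ℝ) (hWmeas : Measurable W) (hWnonneg : ∀ t, 0 ≤ W t)
    (hW0 : W 0 = 0) (hWpos : ∀ t : ℝ, 0 < t → 0 < W t)
    (V Vstar : ℕ → ℝ)
    (hV : ∀ x, V x = ((min x (Nat.floor A + 1) : ℕ) : ℝ))
    (hVstar : ∀ x, Vstar x = if x ≤ Nat.floor A then V x else 0)
    (θ : ℝ) (hθ0 : 0 < θ) (hθ1 : θ < 1) :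
    geometricRisk A θ W Vstar ≤ geometricRisk A θ W V ∧
      (geometricRisk A θ W V < ⊤ →
        geometricRisk A θ W Vstar < geometricRisk A θ W V) :=
  geometric_V_inadmissible_general A hA W hW0 hWpos V Vstar hV hVstar θ hθ0 hθ1
end

section
/- Let A > 0 be a real number, U(x) = 1 if x ≤ A and U(x) = 0 if x > A, and let X be exponential with density (1/θ)e^{-x/θ}, θ > 0. Let V(x) = min(x, A) and define V*(x) = x for x ≤ A and V*(x) = 0 for x > A. Let W : ℝ → [0, ∞) be measurable with W(0) = 0 and W(t) > 0 for t > 0. Then for every θ > 0, E_θ[W(V*(X) − U(X)θ)] ≤ E_θ[W(V(X) − U(X)θ)], with strict inequality whenever E_θ[W(V(X) − U(X)θ)] < ∞; hence V(X) is an inadmissible estimator of U(X)θ under the loss W(a − S). -/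
open MeasureTheory

/-- Risk of the estimator `δ` of `U(X)θ` under the loss `W(a - S)`, where
`U(x) = 1{x ≤ A}` and `X` is exponential with density `(1/θ)e^{-x/θ}` on `x > 0`. -/
noncomputable def expRisk (A θ : ℝ) (W : ℝ → ℝ) (δ : ℝ → ℝ) : ENNReal :=
  ∫⁻ x in Set.Ioi (0 : ℝ),
    ENNReal.ofReal
      (W (δ x - (if x ≤ A then (1 : ℝ) else 0) * θ) * (θ⁻¹ * Real.exp (-x / θ)))

/- The two estimators agree on `(0, A]`, and on `(A, ∞)` the loss of `V*` is `W 0 = 0`, while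
that of `V` is `W A > 0` against a positive density on a set of infinite Lebesgue measure. So
the risk of `V` is that of `V*` plus a strictly positive amount. -/

section

variable {α : Type*} [MeasurableSpace α] {μ : Measure α} {f g : α → ENNReal} {s t : Set α}

theorem setLIntegral_pos_of_pos (hf : Measurable f) (hs : 0 < μ s) (hpos : ∀ x ∈ s, 0 < f x) :
    0 < ∫⁻ x in s, f x ∂μ :=
  (setLIntegral_pos_iff hf).2 <| hs.trans_le <| measure_mono fun x hx => ⟨(hpos x hx).ne', hx⟩

theorem setLIntegral_union_eq_add_of_eqOn (hs : MeasurableSet s) (ht : MeasurableSet t)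
    (hst : Disjoint s t) (hfg : Set.EqOn f g s) (hf : Set.EqOn f 0 t) :
    ∫⁻ x in s ∪ t, g x ∂μ = ∫⁻ x in s ∪ t, f x ∂μ + ∫⁻ x in t, g x ∂μ := by
  rw [lintegral_union ht hst, lintegral_union ht hst, setLIntegral_congr_fun hs hfg,
    setLIntegral_congr_fun ht hf]
  simp

end

theorem setLIntegral_Ioi_ofReal_mul_exp_div_pos {c θ : ℝ} (hc : 0 < c) (hθ : 0 < θ) (a : ℝ) :
    0 < ∫⁻ x in Set.Ioi a, ENNReal.ofReal (c * (θ⁻¹ * Real.exp (-x / θ))) :=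
  setLIntegral_pos_of_pos (by fun_prop) (by simp [Real.volume_Ioi])
    fun x _ => ENNReal.ofReal_pos.2 (by positivity)

theorem exponential_V_inadmissible_general (A : ℝ) (hA : 0 < A)
    (W : ℝ → ℝ)
    (hW0 : W 0 = 0) (hWpos : ∀ t : ℝ, 0 < t → 0 < W t)
    (V Vstar : ℝ → ℝ)
    (hV : ∀ x, V x = min x A)
    (hVstar : ∀ x, Vstar x = if x ≤ A then x else 0)
    (θ : ℝ) (hθ : 0 < θ) :
    expRisk A θ W Vstar ≤ expRisk A θ W V ∧
      (expRisk A θ W V < ⊤ → expRisk A θ W Vstar < expRisk A θ W V) := by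
  have hsplit : expRisk A θ W V = expRisk A θ W Vstar +
      ∫⁻ x in Set.Ioi A, ENNReal.ofReal (W A * (θ⁻¹ * Real.exp (-x / θ))) := by
    rw [expRisk, expRisk, ← Set.Ioc_union_Ioi_eq_Ioi hA.le,
      setLIntegral_union_eq_add_of_eqOn measurableSet_Ioc measurableSet_Ioi
        (Set.Ioc_disjoint_Ioi le_rfl) _ _]
    · refine congrArg _ (setLIntegral_congr_fun measurableSet_Ioi fun x hx => ?_)
      simp [hV, not_le.2 (Set.mem_Ioi.1 hx), (Set.mem_Ioi.1 hx).le]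
    · intro x hx
      simp [hV, hVstar, hx.2]
    · intro x hx
      simp [hVstar, not_le.2 (Set.mem_Ioi.1 hx), hW0]
  have hgap := setLIntegral_Ioi_ofReal_mul_exp_div_pos (hWpos A hA) hθ A
  rw [hsplit]
  exact ⟨le_self_add, fun hfin => ENNReal.lt_add_right (ne_top_of_le_ne_top hfin.ne le_self_add)
    hgap.ne'⟩

/-- Theorem 2.1 (exponential case, `n = 1`): Robbins' estimator
`V(x) = min(x, A)` of `U(X)θ` is inadmissible: the estimator `V*` with
`V*(x) = x` for `x ≤ A` and `V*(x) = 0` for `x > A` has risk no larger for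
every `θ > 0`, and strictly smaller whenever the risk of `V` is finite. -/
theorem exponential_V_inadmissible (A : ℝ) (hA : 0 < A)
    (W : ℝ → ℝ) (hWmeas : Measurable W) (hWnonneg : ∀ t, 0 ≤ W t)
    (hW0 : W 0 = 0) (hWpos : ∀ t : ℝ, 0 < t → 0 < W t)
    (V Vstar : ℝ → ℝ)
    (hV : ∀ x, V x = min x A)
    (hVstar : ∀ x, Vstar x = if x ≤ A then x else 0)
    (θ : ℝ) (hθ : 0 < θ) :
    expRisk A θ W Vstar ≤ expRisk A θ W V ∧
      (expRisk A θ W V < ⊤ → expRisk A θ W Vstar < expRisk A θ W V) :=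
  exponential_V_inadmissible_general A hA W hW0 hWpos V Vstar hV hVstar θ hθ
end

section
/- Let A > 0 be a real number, U(x) = 1 if x ≤ A and U(x) = 0 if x > A, and let X_1, …, X_n be independent exponential random variables with densities (1/θ_j)e^{-x/θ_j}, θ_j > 0. Let S = ∑_{j=1}^n U(X_j)θ_j, V(X) = ∑_{j=1}^n min(X_j, A), and define V*(X) = 0 if X_j > A for all j, and V*(X) = V(X) otherwise. Let W : ℝ → [0, ∞) be measurable with W(0) = 0 and W(t) > 0 for t > 0. Then for every θ ∈ (0, ∞)^n, E_θ[W(V*(X) − S)] ≤ E_θ[W(V(X) − S)], with strict inequality whenever the right-hand risk is finite; hence V(X) is an inadmissible estimator of S under the loss W(a − S). -/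
open MeasureTheory

/-- The exponential distribution with scale `θ` (density `(1/θ)e^{-x/θ}` on `x > 0`),
as a measure on `ℝ`. -/
noncomputable def expMeas (θ : ℝ) : Measure ℝ :=
  volume.withDensity fun x =>
    ENNReal.ofReal (if 0 < x then θ⁻¹ * Real.exp (-x / θ) else 0)

/-- The estimand `S(x, θ) = ∑_j U(x_j)θ_j` with `U(x) = 1{x ≤ A}`. -/
noncomputable def expS (n : ℕ) (A : ℝ) (θ : Fin n → ℝ) (x : Fin n → ℝ) : ℝ :=
  ∑ j, (if x j ≤ A then θ j else 0)

/-- Risk of the estimator `δ` of `S` under the loss `W(a - S)` when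
`X_1, …, X_n` are independent exponential with scales `θ_1, …, θ_n`. -/
noncomputable def expRiskN (n : ℕ) (A : ℝ) (θ : Fin n → ℝ) (W : ℝ → ℝ)
    (δ : (Fin n → ℝ) → ℝ) : ENNReal :=
  ∫⁻ x : Fin n → ℝ, ENNReal.ofReal (W (δ x - expS n A θ x))
    ∂(Measure.pi fun j => expMeas (θ j))

/-!
On the event that every `X_j` exceeds `A` we have `S = 0` but `V = nA`, so `V` pays the loss
`W(nA) > 0` there, while `V*` pays nothing and agrees with `V` off that event. Hence
`risk(V) = risk(V*) + W(nA) · P(X_j > A for all j)`, and the tail event has positive probability.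
-/

instance expMeas.instSigmaFinite (θ : ℝ) : SigmaFinite (expMeas θ) :=
  SigmaFinite.withDensity_ofReal _

theorem expMeas_Ioi_ne_zero {θ : ℝ} (hθ : 0 < θ) (A : ℝ) : expMeas θ (Set.Ioi A) ≠ 0 := by
  have hdensity : {x : ℝ | ENNReal.ofReal (if 0 < x then θ⁻¹ * Real.exp (-x / θ) else 0) ≠ 0}
      = Set.Ioi 0 := by
    ext x
    by_cases hx : 0 < x <;> simp [hx, hθ, Real.exp_pos]
  have hmeas : Measurable fun x : ℝ =>
      ENNReal.ofReal (if 0 < x then θ⁻¹ * Real.exp (-x / θ) else 0) :=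
    (Measurable.ite measurableSet_Ioi (by fun_prop) measurable_const).ennreal_ofReal
  rw [expMeas, Ne, withDensity_apply_eq_zero hmeas, hdensity, Set.Ioi_inter_Ioi, Real.volume_Ioi]
  exact ENNReal.top_ne_zero

theorem pi_expMeas_forall_lt_ne_zero {ι : Type*} [Fintype ι] {θ : ι → ℝ} (hθ : ∀ j, 0 < θ j)
    (A : ℝ) : Measure.pi (fun j => expMeas (θ j)) {x | ∀ j, A < x j} ≠ 0 := by
  have hbox : {x : ι → ℝ | ∀ j, A < x j} = Set.univ.pi fun _ => Set.Ioi A := by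
    ext x; simp
  rw [hbox, Measure.pi_pi]
  exact Finset.prod_ne_zero_iff.mpr fun j _ => expMeas_Ioi_ne_zero (hθ j) A

theorem expS_eq_zero_of_forall_lt {n : ℕ} {A : ℝ} (θ : Fin n → ℝ) {x : Fin n → ℝ}
    (hx : ∀ j, A < x j) : expS n A θ x = 0 :=
  Finset.sum_eq_zero fun j _ => if_neg (hx j).not_ge

theorem expRiskN_eq_expRiskN_add_tail_loss {n : ℕ} {A : ℝ} {θ : Fin n → ℝ} {W : ℝ → ℝ}
    (hW0 : W 0 = 0) {δ δ₀ : (Fin n → ℝ) → ℝ} {c : ℝ} (hδ : ∀ x, (∀ j, A < x j) → δ x = c)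
    (hδ₀ : ∀ x, δ₀ x = if ∀ j, A < x j then 0 else δ x) :
    expRiskN n A θ W δ = expRiskN n A θ W δ₀
      + ENNReal.ofReal (W c) * Measure.pi (fun j => expMeas (θ j)) {x | ∀ j, A < x j} := by
  have hB : MeasurableSet {x : Fin n → ℝ | ∀ j, A < x j} := by measurability
  rw [expRiskN, expRiskN, ← lintegral_indicator_const hB,
    ← lintegral_add_right _ (measurable_const.indicator hB)]
  congr 1 with x
  by_cases hx : ∀ j, A < x j
  · simp [hδ₀, hδ x hx, hx, expS_eq_zero_of_forall_lt θ hx, hW0]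
  · simp [hδ₀, hx]

theorem exponential_V_inadmissible_n_general (n : ℕ) (hn : 0 < n) (A : ℝ) (hA : 0 < A)
    (W : ℝ → ℝ)
    (hW0 : W 0 = 0) (hWpos : ∀ t : ℝ, 0 < t → 0 < W t)
    (V Vstar : (Fin n → ℝ) → ℝ)
    (hV : ∀ x, V x = ∑ j, min (x j) A)
    (hVstar : ∀ x, Vstar x = if ∀ j, A < x j then 0 else V x)
    (θ : Fin n → ℝ) (hθ : ∀ j, 0 < θ j) :
    expRiskN n A θ W Vstar ≤ expRiskN n A θ W V ∧
      (expRiskN n A θ W V < ⊤ →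
        expRiskN n A θ W Vstar < expRiskN n A θ W V) := by
  have hV_tail : ∀ x, (∀ j, A < x j) → V x = n * A := fun x hx => by
    simp [hV, min_eq_right (hx _).le]
  have hgain : ENNReal.ofReal (W (n * A))
      * Measure.pi (fun j => expMeas (θ j)) {x | ∀ j, A < x j} ≠ 0 :=
    mul_ne_zero (ENNReal.ofReal_pos.mpr (hWpos _ (by positivity))).ne'
      (pi_expMeas_forall_lt_ne_zero hθ A)
  rw [expRiskN_eq_expRiskN_add_tail_loss hW0 hV_tail hVstar]
  exact ⟨le_self_add, fun hfin => ENNReal.lt_add_right (ENNReal.add_lt_top.mp hfin).1.ne hgain⟩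

/-- Theorem 2.1 (exponential case): the unbiased estimator
`V(X) = ∑_j min(X_j, A)` of `S = ∑_j U(X_j)θ_j` is inadmissible: the estimator
`V*` vanishing on `{∀ j, X_j > A}` and agreeing with `V` elsewhere is at least
as good for every `θ ∈ (0,∞)^n`, and strictly better whenever the risk of `V`
is finite. -/
theorem exponential_V_inadmissible_n (n : ℕ) (hn : 0 < n) (A : ℝ) (hA : 0 < A)
    (W : ℝ → ℝ) (hWmeas : Measurable W) (hWnonneg : ∀ t, 0 ≤ W t)
    (hW0 : W 0 = 0) (hWpos : ∀ t : ℝ, 0 < t → 0 < W t)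
    (V Vstar : (Fin n → ℝ) → ℝ)
    (hV : ∀ x, V x = ∑ j, min (x j) A)
    (hVstar : ∀ x, Vstar x = if ∀ j, A < x j then 0 else V x)
    (θ : Fin n → ℝ) (hθ : ∀ j, 0 < θ j) :
    expRiskN n A θ W Vstar ≤ expRiskN n A θ W V ∧
      (expRiskN n A θ W V < ⊤ →
        expRiskN n A θ W Vstar < expRiskN n A θ W V) :=
  exponential_V_inadmissible_n_general n hn A hA W hW0 hWpos V Vstar hV hVstar θ hθ
end

section
/- Let A > 0 be a real number, U(x) = 1 if x ≤ A and U(x) = 0 if x > A, and let X be uniformly distributed on (0, θ), θ > 0. Let V(x) = 2x for x ≤ A and V(x) = A for x > A, and define V*(x) = 2x for x ≤ A and V*(x) = 0 for x > A. Let W : ℝ → [0, ∞) be measurable with W(0) = 0 and W(t) > 0 for t > 0. Then for every θ > 0, E_θ[W(V*(X) − U(X)θ)] ≤ E_θ[W(V(X) − U(X)θ)], and for every θ > A with E_θ[W(V(X) − U(X)θ)] < ∞ the inequality is strict; hence V(X) is an inadmissible estimator of U(X)θ under the loss W(a − S). -/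
/-!
Beyond `A` the estimand `U(X)θ` vanishes, so replacing an estimator `δ` there by the exact value
`0` (that is, passing to `(Set.Iic A).indicator δ`, which is `V*` when `δ = V`) cannot increase
the loss, and removes the loss `W(δ x)` on `(A, θ)`. For `V` this loss is the constant `W(A) > 0`
on an interval of positive length, so the risk drops strictly whenever it is finite.
-/

open MeasureTheory

/-- Risk of the estimator `δ` of `U(X)θ` under the loss `W(a - S)`, where
`U(x) = 1{x ≤ A}` and `X` is uniform on `(0, θ)` with density `1/θ`. -/
noncomputable def unifRisk (A θ : ℝ) (W : ℝ → ℝ) (δ : ℝ → ℝ) : ENNReal :=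
  ∫⁻ x in Set.Ioo (0 : ℝ) θ,
    ENNReal.ofReal (W (δ x - (if x ≤ A then (1 : ℝ) else 0) * θ) * θ⁻¹)

open Set

section
variable {A θ : ℝ} {W : ℝ → ℝ}

theorem unifRisk_eq_add (hA : 0 ≤ A) (hAθ : A < θ) (δ : ℝ → ℝ) :
    unifRisk A θ W δ =
      (∫⁻ x in Ioc 0 A, ENNReal.ofReal (W (δ x - θ) * θ⁻¹)) +
        ∫⁻ x in Ioo A θ, ENNReal.ofReal (W (δ x) * θ⁻¹) := by
  rw [unifRisk, ← Ioc_union_Ioo_eq_Ioo hA hAθ,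
    lintegral_union measurableSet_Ioo (Ioc_disjoint_Ioi_same.mono_right Ioo_subset_Ioi_self)]
  congr 1
  · exact setLIntegral_congr_fun measurableSet_Ioc fun x hx => by simp [hx.2]
  · exact setLIntegral_congr_fun measurableSet_Ioo fun x hx => by simp [not_le.2 hx.1]

theorem unifRisk_indicator_Iic_le (hW0 : W 0 = 0) (δ : ℝ → ℝ) :
    unifRisk A θ W ((Iic A).indicator δ) ≤ unifRisk A θ W δ := by
  refine lintegral_mono fun x => ?_
  by_cases hx : x ≤ A
  · simp [hx]
  · simp [hx, hW0]

theorem unifRisk_indicator_Iic_lt (hA : 0 ≤ A) (hAθ : A < θ) (hW0 : W 0 = 0) {δ : ℝ → ℝ}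
    (hfin : unifRisk A θ W δ < ⊤)
    (hpos : 0 < ∫⁻ x in Ioo A θ, ENNReal.ofReal (W (δ x) * θ⁻¹)) :
    unifRisk A θ W ((Iic A).indicator δ) < unifRisk A θ W δ := by
  rw [unifRisk_eq_add hA hAθ] at hfin ⊢
  rw [unifRisk_eq_add hA hAθ]
  have h_agree : ∫⁻ x in Ioc 0 A, ENNReal.ofReal (W ((Iic A).indicator δ x - θ) * θ⁻¹) =
      ∫⁻ x in Ioc 0 A, ENNReal.ofReal (W (δ x - θ) * θ⁻¹) :=
    setLIntegral_congr_fun measurableSet_Ioc fun x hx => by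
      rw [indicator_of_mem (show x ∈ Iic A from hx.2)]
  have h_vanish : ∫⁻ x in Ioo A θ, ENNReal.ofReal (W ((Iic A).indicator δ x) * θ⁻¹) = 0 :=
    (setLIntegral_congr_fun measurableSet_Ioo fun x hx => by
      rw [indicator_of_notMem (show x ∉ Iic A from not_le.2 hx.1), hW0, zero_mul]).trans
      (by simp)
  rw [h_agree, h_vanish]
  simpa using ENNReal.add_lt_add_left (ENNReal.add_lt_top.1 hfin).1.ne hpos

end

theorem uniform_V_inadmissible_general (A : ℝ) (hA : 0 < A)
    (W : ℝ → ℝ)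
    (hW0 : W 0 = 0) (hWpos : ∀ t : ℝ, 0 < t → 0 < W t)
    (V Vstar : ℝ → ℝ)
    (hV : ∀ x, V x = if x ≤ A then 2 * x else A)
    (hVstar : ∀ x, Vstar x = if x ≤ A then 2 * x else 0) :
    (∀ θ : ℝ, 0 < θ → unifRisk A θ W Vstar ≤ unifRisk A θ W V) ∧
      (∀ θ : ℝ, A < θ → unifRisk A θ W V < ⊤ →
        unifRisk A θ W Vstar < unifRisk A θ W V) := by
  obtain rfl : Vstar = (Iic A).indicator V := funext fun x => by
    by_cases hx : x ≤ A <;> simp [hV, hVstar, hx]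
  refine ⟨fun θ _ => unifRisk_indicator_Iic_le hW0 V,
    fun θ hAθ hfin => unifRisk_indicator_Iic_lt hA.le hAθ hW0 hfin ?_⟩
  have hθ : 0 < θ := hA.trans hAθ
  rw [setLIntegral_congr_fun measurableSet_Ioo fun x hx => by rw [hV, if_neg (not_le.2 hx.1)],
    setLIntegral_const, Real.volume_Ioo]
  exact ENNReal.mul_pos (by simpa using mul_pos (hWpos A hA) (inv_pos.2 hθ))
    (by simpa using hAθ)

/-- Theorem 2.1 (uniform scale case, `n = 1`): Robbins' estimator
(`V(x) = 2x` for `x ≤ A`, `V(x) = A` for `x > A`) of `U(X)θ` is inadmissible: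
the estimator `V*` with `V*(x) = 2x` for `x ≤ A` and `V*(x) = 0` for `x > A`
has risk no larger for every `θ > 0`, and strictly smaller for every `θ > A`
at which the risk of `V` is finite. -/
theorem uniform_V_inadmissible (A : ℝ) (hA : 0 < A)
    (W : ℝ → ℝ) (hWmeas : Measurable W) (hWnonneg : ∀ t, 0 ≤ W t)
    (hW0 : W 0 = 0) (hWpos : ∀ t : ℝ, 0 < t → 0 < W t)
    (V Vstar : ℝ → ℝ)
    (hV : ∀ x, V x = if x ≤ A then 2 * x else A)
    (hVstar : ∀ x, Vstar x = if x ≤ A then 2 * x else 0) :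
    (∀ θ : ℝ, 0 < θ → unifRisk A θ W Vstar ≤ unifRisk A θ W V) ∧
      (∀ θ : ℝ, A < θ → unifRisk A θ W V < ⊤ →
        unifRisk A θ W Vstar < unifRisk A θ W V) :=
  uniform_V_inadmissible_general A hA W hW0 hWpos V Vstar hV hVstar
end
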